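/- Let (λ_k)_{k≥0} be a nondecreasing unbounded sequence of nonnegative reals satisfying λ_k ∼ C k^{1/d} (C, d > 0), let N(λ) = #{k : λ_k ≤ λ}, and let (b_k) be a bounded sequence of complex numbers. Then the Cesàro average of b truncated at spectral levels agrees with the ordinary Cesàro average: (1/(n+1)) ∑_{k=0}^n b_k − (1/N(λ_n)) ∑_{k=0}^{N(λ_n)−1} b_k → 0 as n → ∞. -/

import Mathlib

open Filter Finset Topology Asymptotics

/-!
Write `m = N(λ_n)`. Splitting the sum up to `m` at `n + 1` shows that the two Cesàro means differ
by at most `2K (1 - (n+1)/m)` when `‖b_k‖ ≤ K`, so it suffices that `(n+1)/m → 1`. Since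
`λ_{m-1} ≤ λ_n` with `m - 1 ≥ n`, Weyl's law `λ_k = f_k k^{1/d}` with `f_k → C > 0` gives
`1 ≤ ((m-1)/n)^{1/d} ≤ f_n / f_{m-1} → 1`.
-/

section Cesaro

variable {𝕜 : Type*} [RCLike 𝕜] {b : ℕ → 𝕜} {K : ℝ}

def cesaroMean (b : ℕ → 𝕜) (n : ℕ) : 𝕜 := (n : 𝕜)⁻¹ * ∑ k ∈ range n, b k

lemma norm_inv_natCast_mul_sum_le (hK : ∀ k, ‖b k‖ ≤ K) (m : ℕ) (s : Finset ℕ) :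
    ‖(m : 𝕜)⁻¹ * ∑ k ∈ s, b k‖ ≤ (m : ℝ)⁻¹ * (#s * K) := by
  rw [norm_mul, norm_inv, RCLike.norm_natCast]
  gcongr
  simpa using norm_sum_le_of_le s fun k _ => hK k

lemma norm_cesaroMean_le (hK : ∀ k, ‖b k‖ ≤ K) (n : ℕ) : ‖cesaroMean b n‖ ≤ K := by
  have hK0 : 0 ≤ K := (norm_nonneg _).trans (hK 0)
  refine (norm_inv_natCast_mul_sum_le hK n _).trans ?_
  rcases n.eq_zero_or_pos with rfl | hn
  · simpa using hK0
  · rw [card_range, inv_mul_cancel_left₀ (by positivity)]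

lemma cesaroMean_eq_div_mul_add {a m : ℕ} (ham : a ≤ m) :
    cesaroMean b m = (a / m : 𝕜) * cesaroMean b a + (m : 𝕜)⁻¹ * ∑ k ∈ Ico a m, b k := by
  rcases a.eq_zero_or_pos with rfl | ha
  · simp [cesaroMean]
  · have : (a : 𝕜) ≠ 0 := by exact_mod_cast ha.ne'
    rw [cesaroMean, cesaroMean, ← sum_range_add_sum_Ico _ ham]
    field_simp

lemma norm_cesaroMean_sub_le (hK : ∀ k, ‖b k‖ ≤ K) {a m : ℕ} (ham : a ≤ m) :
    ‖cesaroMean b a - cesaroMean b m‖ ≤ 2 * K * (1 - a / m) := by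
  rcases m.eq_zero_or_pos with rfl | hm
  · obtain rfl : a = 0 := by omega
    simpa using mul_nonneg zero_le_two ((norm_nonneg _).trans (hK 0))
  have hcoef : ‖1 - (a / m : 𝕜)‖ = 1 - a / m := by
    have : (a / m : ℝ) ≤ 1 := div_le_one_of_le₀ (by exact_mod_cast ham) (by positivity)
    rw [← RCLike.ofReal_natCast a, ← RCLike.ofReal_natCast m, ← RCLike.ofReal_div,
      ← RCLike.ofReal_one, ← RCLike.ofReal_sub, RCLike.norm_ofReal, abs_of_nonneg (by linarith)]
  have htail : ‖(m : 𝕜)⁻¹ * ∑ k ∈ Ico a m, b k‖ ≤ (1 - a / m) * K := by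
    refine (norm_inv_natCast_mul_sum_le hK m _).trans_eq ?_
    rw [Nat.card_Ico, Nat.cast_sub ham]
    field_simp
  calc ‖cesaroMean b a - cesaroMean b m‖
      = ‖(1 - (a / m : 𝕜)) * cesaroMean b a - (m : 𝕜)⁻¹ * ∑ k ∈ Ico a m, b k‖ := by
        rw [cesaroMean_eq_div_mul_add ham]; ring_nf
    _ ≤ (1 - a / m) * K + (1 - a / m) * K := by
        refine (norm_sub_le _ _).trans (add_le_add ?_ htail)
        rw [norm_mul, hcoef]
        exact mul_le_mul_of_nonneg_left (norm_cesaroMean_le hK a) (by rw [← hcoef]; positivity)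
    _ = 2 * K * (1 - a / m) := by ring

lemma tendsto_cesaroMean_sub_cesaroMean (hK : ∀ k, ‖b k‖ ≤ K) {a m : ℕ → ℕ}
    (ham : ∀ n, a n ≤ m n) (hratio : Tendsto (fun n => (a n : ℝ) / m n) atTop (𝓝 1)) :
    Tendsto (fun n => cesaroMean b (a n) - cesaroMean b (m n)) atTop (𝓝 0) := by
  have hbound : Tendsto (fun n => 2 * K * (1 - (a n : ℝ) / m n)) atTop (𝓝 0) := by
    simpa using (tendsto_const_nhds (x := (1 : ℝ)) |>.sub hratio).const_mul (2 * K)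
  exact squeeze_zero_norm (fun n => norm_cesaroMean_sub_le hK (ham n)) hbound

end Cesaro

lemma rpow_div_le_div_of_weyl_le {d : ℝ} {lam : ℕ → ℝ} {n j : ℕ} (hn : 0 < n) (hnj : n ≤ j)
    (hlam : lam j ≤ lam n) (hfj : 0 < lam j * (j : ℝ) ^ (-(1 / d))) :
    ((j : ℝ) / n) ^ (1 / d) ≤
      (lam n * (n : ℝ) ^ (-(1 / d))) / (lam j * (j : ℝ) ^ (-(1 / d))) := by
  have hn' : (0 : ℝ) < n := by exact_mod_cast hn
  have hj' : (0 : ℝ) < j := hn'.trans_le (by exact_mod_cast hnj)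
  rw [Real.rpow_neg hj'.le] at hfj
  have hnp : 0 < (n : ℝ) ^ (1 / d) := by positivity
  have hjp : 0 < (j : ℝ) ^ (1 / d) := by positivity
  rw [Real.div_rpow hj'.le hn'.le, Real.rpow_neg hn'.le, Real.rpow_neg hj'.le,
    div_le_div_iff₀ hnp hfj]
  field_simp
  exact hlam

lemma tendsto_div_of_weyl {d C : ℝ} (hd : 0 < d) (hC : 0 < C) {lam : ℕ → ℝ}
    (hweyl : Tendsto (fun k : ℕ => lam k * (k : ℝ) ^ (-(1 / d))) atTop (𝓝 C))
    {j : ℕ → ℕ} (hj : ∀ n, n ≤ j n) (hlam : ∀ n, lam (j n) ≤ lam n) :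
    Tendsto (fun n => (j n : ℝ) / n) atTop (𝓝 1) := by
  have hjtop : Tendsto j atTop atTop := tendsto_atTop_mono hj tendsto_id
  have hfpos := hweyl.eventually (eventually_gt_nhds hC)
  have hupper_lim := div_self hC.ne' ▸ hweyl.div (hweyl.comp hjtop) hC.ne'
  have hupper : ∀ᶠ n in atTop, ((j n : ℝ) / n) ^ (1 / d) ≤
      (lam n * (n : ℝ) ^ (-(1 / d))) / (lam (j n) * (j n : ℝ) ^ (-(1 / d))) := by
    filter_upwards [eventually_gt_atTop 0, hjtop.eventually hfpos] with n hn hfj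
    exact rpow_div_le_div_of_weyl_le hn (hj n) (hlam n) hfj
  have hlower : ∀ᶠ n in atTop, 1 ≤ ((j n : ℝ) / n) ^ (1 / d) := by
    filter_upwards [eventually_gt_atTop 0] with n hn
    exact Real.one_le_rpow ((one_le_div₀ (by positivity)).mpr (by exact_mod_cast hj n))
      (by positivity)
  have hroot := tendsto_of_tendsto_of_tendsto_of_le_of_le' tendsto_const_nhds hupper_lim
    hlower hupper
  refine (Real.one_rpow d ▸ hroot.rpow_const (p := d) (Or.inr hd.le)).congr fun n => ?_
  rw [← Real.rpow_mul (by positivity), one_div_mul_cancel hd.ne', Real.rpow_one]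

lemma tendsto_succ_div_succ_of_tendsto_div {j : ℕ → ℕ}
    (h : Tendsto (fun n => (j n : ℝ) / n) atTop (𝓝 1)) :
    Tendsto (fun n => ((n + 1 : ℕ) : ℝ) / (j n + 1 : ℕ)) atTop (𝓝 1) := by
  have hnat : Tendsto (norm ∘ fun n : ℕ => (n : ℝ)) atTop atTop :=
    tendsto_norm_atTop_atTop.comp tendsto_natCast_atTop_atTop
  have hj : (fun n => (j n : ℝ)) ~[atTop] fun n => (n : ℝ) := isEquivalent_of_tendsto_one h
  have hsucc := (IsEquivalent.refl.add_const_of_norm_tendsto_atTop hnat (c := 1)).trans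
    (hj.add_const_of_norm_tendsto_atTop hnat (c := 1)).symm
  refine ((isEquivalent_iff_tendsto_one (.of_forall fun n => ?_)).mp hsucc).congr fun n => ?_
  · positivity
  · simp

theorem cesaro_sub_spectral_cesaro_tendsto_zero_general
    (d C : ℝ) (hd : 0 < d) (hC : 0 < C)
    (lam : ℕ → ℝ)
    (hweyl : Tendsto (fun k : ℕ => lam k * Real.rpow (k : ℝ) (-(1 / d))) atTop (nhds C))
    (N : ℝ → ℕ) (hN : ∀ (x : ℝ) (k : ℕ), lam k ≤ x ↔ k < N x)
    (b : ℕ → ℂ) (hb : ∃ K : ℝ, ∀ k, ‖b k‖ ≤ K) :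
    Tendsto (fun n : ℕ =>
        ((n : ℂ) + 1)⁻¹ * ∑ k ∈ range (n + 1), b k
      - ((N (lam n) : ℂ))⁻¹ * ∑ k ∈ range (N (lam n)), b k)
      atTop (nhds 0) := by
  obtain ⟨K, hK⟩ := hb
  have hlt : ∀ n, n < N (lam n) := fun n => (hN (lam n) n).mp le_rfl
  have hratio := tendsto_succ_div_succ_of_tendsto_div <| tendsto_div_of_weyl hd hC hweyl
    (j := fun n => N (lam n) - 1) (fun n => by have := hlt n; omega)
    (fun n => (hN _ _).mpr (by have := hlt n; omega))
  have hsucc : ∀ n, N (lam n) - 1 + 1 = N (lam n) := fun n => by have := hlt n; omega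
  simp only [hsucc] at hratio
  simpa [cesaroMean] using tendsto_cesaroMean_sub_cesaroMean hK hlt hratio

/-- Under Weyl's law `λ_k ∼ C k^{1/d}`, the Cesàro average of a bounded
sequence `b` truncated at the spectral levels `N(λ_n)` agrees asymptotically with the
ordinary Cesàro average. -/
theorem cesaro_sub_spectral_cesaro_tendsto_zero
    (d C : ℝ) (hd : 0 < d) (hC : 0 < C)
    (lam : ℕ → ℝ) (hmono : Monotone lam) (hpos : ∀ k, 0 ≤ lam k)
    (htop : Tendsto lam atTop atTop)
    (hweyl : Tendsto (fun k : ℕ => lam k * Real.rpow (k : ℝ) (-(1 / d))) atTop (nhds C))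
    (N : ℝ → ℕ) (hN : ∀ (x : ℝ) (k : ℕ), lam k ≤ x ↔ k < N x)
    (b : ℕ → ℂ) (hb : ∃ K : ℝ, ∀ k, ‖b k‖ ≤ K) :
    Tendsto (fun n : ℕ =>
        ((n : ℂ) + 1)⁻¹ * ∑ k ∈ range (n + 1), b k
      - ((N (lam n) : ℂ))⁻¹ * ∑ k ∈ range (N (lam n)), b k)
      atTop (nhds 0) :=
  cesaro_sub_spectral_cesaro_tendsto_zero_general d C hd hC lam hweyl N hN b hb
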